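/- (Lemma on invariance of cones, part (a).) Suppose (X',Y') is a valid ping-pong table. Then for each fixed j ∈ {1,2,3} and each positive integer t, the matrix M = (T·R^j)^t satisfies either M·cl(C') ⊆ cl(C') or M·cl(C') ⊆ −cl(C'), where cl(C') denotes the topological closure of C' in ℝ³ (equivalently, the set of nonnegative linear combinations of u',v',w'). -/

import Mathlib

open Matrix

/-- The matrix `R`. -/
def R : Matrix (Fin 3) (Fin 3) ℝ := !![0,0,-1; 1,0,-1; 0,1,-1]

/-- The matrix `T`. -/
def T : Matrix (Fin 3) (Fin 3) ℝ := !![-1,0,0; 2,1,0; -4,0,1]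

/-- The open cone generated by three vectors in `ℝ³`. -/
def cone3 (u' v' w' : Fin 3 → ℝ) : Set (Fin 3 → ℝ) :=
  {p | ∃ a b c : ℝ, 0 < a ∧ 0 < b ∧ 0 < c ∧ p = a • u' + b • v' + c • w'}

/-- `X' = C' ∪ (−C')` where `C'` is the open cone generated by `u', v', w'`. -/
def Xset (u' v' w' : Fin 3 → ℝ) : Set (Fin 3 → ℝ) :=
  cone3 u' v' w' ∪ (-(cone3 u' v' w'))

/-- `Y' = R·X' ∪ R²·X' ∪ R³·X'`. -/
def Yset (u' v' w' : Fin 3 → ℝ) : Set (Fin 3 → ℝ) :=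
  R.mulVec '' Xset u' v' w' ∪ (R ^ 2).mulVec '' Xset u' v' w' ∪
    (R ^ 3).mulVec '' Xset u' v' w'

/-- `(X',Y')` is a valid ping-pong table: `X' ∩ Y' = ∅` and `T·Y' ⊆ X'`
(the condition that `R, R², R³` map `X'` into `Y'` holds by construction). -/
def IsValidTable (u' v' w' : Fin 3 → ℝ) : Prop :=
  Xset u' v' w' ∩ Yset u' v' w' = ∅ ∧
    T.mulVec '' Yset u' v' w' ⊆ Xset u' v' w'

/-- Part (a) of the lemma: for a valid ping-pong table, each `M = (T·R^j)^t`
(`j ∈ {1,2,3}`, `t` a positive integer) maps the closed cone `cl(C')` into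
`cl(C')` or into `−cl(C')`. -/
theorem cone_invariance_a (u' v' w' : Fin 3 → ℝ)
    (hind : LinearIndependent ℝ ![u', v', w'])
    (hvalid : IsValidTable u' v' w')
    (j : ℕ) (hj : j ∈ ({1, 2, 3} : Set ℕ)) (t : ℕ) (ht : 0 < t) :
    ((T * R ^ j) ^ t).mulVec '' closure (cone3 u' v' w') ⊆ closure (cone3 u' v' w') ∨
    ((T * R ^ j) ^ t).mulVec '' closure (cone3 u' v' w') ⊆ -(closure (cone3 u' v' w')) := by
  classical
  obtain ⟨-, hTY⟩ := hvalid
  set C := cone3 u' v' w' with hCdef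
  -- `M := T * R^j` maps `X'` into `X'`
  have hMX : ∀ x ∈ Xset u' v' w', (T * R ^ j).mulVec x ∈ Xset u' v' w' := by
    intro x hx
    have hRX : (R ^ j).mulVec x ∈ Yset u' v' w' := by
      rcases hj with rfl | rfl | rfl
      · exact Or.inl (Or.inl ⟨x, hx, by rw [pow_one]⟩)
      · exact Or.inl (Or.inr ⟨x, hx, rfl⟩)
      · exact Or.inr ⟨x, hx, rfl⟩
    have h : (T * R ^ j).mulVec x = T.mulVec ((R ^ j).mulVec x) :=
      (mulVec_mulVec x T (R ^ j)).symm
    rw [h]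
    exact hTY ⟨_, hRX, rfl⟩
  -- hence so do its powers
  have hMtX : ∀ n : ℕ, ∀ x ∈ Xset u' v' w',
      ((T * R ^ j) ^ (n + 1)).mulVec x ∈ Xset u' v' w' := by
    intro n
    induction n with
    | zero => intro x hx; rw [pow_one]; exact hMX x hx
    | succ n ih =>
      intro x hx
      have h : ((T * R ^ j) ^ (n + 1 + 1)).mulVec x
          = (T * R ^ j).mulVec (((T * R ^ j) ^ (n + 1)).mulVec x) := by
        rw [mulVec_mulVec, ← pow_succ']
      rw [h]
      exact hMX _ (ih x hx)
  -- the basis given by u',v',w'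
  have hcard : Fintype.card (Fin 3) = Module.finrank ℝ (Fin 3 → ℝ) := by simp
  set b : Module.Basis (Fin 3) ℝ (Fin 3 → ℝ) :=
    basisOfLinearIndependentOfCardEqFinrank hind hcard with hbdef
  have hb0 : b 0 = u' := by rw [hbdef, coe_basisOfLinearIndependentOfCardEqFinrank]; rfl
  have hb1 : b 1 = v' := by rw [hbdef, coe_basisOfLinearIndependentOfCardEqFinrank]; rfl
  have hb2 : b 2 = w' := by rw [hbdef, coe_basisOfLinearIndependentOfCardEqFinrank]; rfl
  -- the cone is the preimage of the open positive octant
  have hchar : C = ⇑b.equivFun ⁻¹' {q : Fin 3 → ℝ | ∀ i, 0 < q i} := by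
    ext p
    constructor
    · rintro ⟨a, a', a'', ha, ha', ha'', rfl⟩
      have hp : a • u' + a' • v' + a'' • w' = b.equivFun.symm ![a, a', a''] := by
        rw [Module.Basis.equivFun_symm_apply, Fin.sum_univ_three, hb0, hb1, hb2]
        simp [Matrix.cons_val_zero, Matrix.cons_val_one]
      intro i
      show 0 < b.equivFun (a • u' + a' • v' + a'' • w') i
      rw [hp, LinearEquiv.apply_symm_apply]
      fin_cases i <;> simpa
    · intro hp
      refine ⟨b.equivFun p 0, b.equivFun p 1, b.equivFun p 2, hp 0, hp 1, hp 2, ?_⟩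
      conv_lhs => rw [← b.equivFun.symm_apply_apply p]
      rw [Module.Basis.equivFun_symm_apply, Fin.sum_univ_three, hb0, hb1, hb2]
  have hcontE : Continuous ⇑b.equivFun :=
    LinearMap.continuous_of_finiteDimensional (b.equivFun : (Fin 3 → ℝ) →ₗ[ℝ] (Fin 3 → ℝ))
  have hposOpen : IsOpen {q : Fin 3 → ℝ | ∀ i, 0 < q i} := by
    have h : {q : Fin 3 → ℝ | ∀ i, 0 < q i}
        = Set.pi Set.univ (fun _ => Set.Ioi (0 : ℝ)) := by
      ext q; simp [Set.mem_univ_pi]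
    rw [h]
    exact isOpen_set_pi Set.finite_univ (fun i _ => isOpen_Ioi)
  have hCopen : IsOpen C := by rw [hchar]; exact hposOpen.preimage hcontE
  have hCconv : Convex ℝ C := by
    rw [hchar]
    have hpc : Convex ℝ {q : Fin 3 → ℝ | ∀ i, 0 < q i} := by
      have h : {q : Fin 3 → ℝ | ∀ i, 0 < q i}
          = Set.pi Set.univ (fun _ => Set.Ioi (0 : ℝ)) := by
        ext q; simp [Set.mem_univ_pi]
      rw [h]
      exact convex_pi (fun i _ => convex_Ioi (0 : ℝ))
    exact hpc.linear_preimage (b.equivFun : (Fin 3 → ℝ) →ₗ[ℝ] (Fin 3 → ℝ))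
  -- C and -C are disjoint
  have hdisjC : Disjoint C (-C) := by
    rw [Set.disjoint_left]
    intro p hpC hpN
    have h1 : 0 < b.equivFun p 0 := (hchar ▸ hpC) 0
    have h2 : 0 < b.equivFun (-p) 0 := (hchar ▸ (Set.mem_neg.mp hpN)) 0
    rw [map_neg] at h2
    simp only [Pi.neg_apply] at h2
    linarith
  -- the matrix M^t acts continuously and linearly
  set M := (T * R ^ j) ^ t with hMdef
  have hcontM : Continuous M.mulVec := by
    have h : M.mulVec = ⇑M.mulVecLin := by
      funext v; rw [mulVecLin_apply]
    rw [h]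
    exact LinearMap.continuous_of_finiteDimensional M.mulVecLin
  -- the image of C under M^t is convex, nonempty, inside C ∪ -C
  have hSconv : Convex ℝ (M.mulVec '' C) := by
    have h : M.mulVec '' C = ⇑M.mulVecLin '' C := by
      apply Set.image_congr
      intro x _; rw [mulVecLin_apply]
    rw [h]
    exact hCconv.linear_image M.mulVecLin
  have hSsub : M.mulVec '' C ⊆ C ∪ (-C) := by
    rintro - ⟨x, hx, rfl⟩
    obtain ⟨n, rfl⟩ : ∃ n, t = n + 1 := ⟨t - 1, by omega⟩
    exact hMtX n x (Or.inl hx)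
  -- hence it lies in C or in -C
  have hcases : M.mulVec '' C ⊆ C ∨ M.mulVec '' C ⊆ -C :=
    IsPreconnected.subset_or_subset hCopen (hCopen.neg) hdisjC hSsub
      hSconv.isPreconnected
  have hkey : M.mulVec '' closure C ⊆ closure (M.mulVec '' C) :=
    image_closure_subset_closure_image hcontM
  rcases hcases with hcase | hcase
  · left
    exact hkey.trans (closure_minimal (hcase.trans subset_closure) isClosed_closure)
  · right
    have h : closure (-C) = -(closure C) := (neg_closure C).symm
    exact hkey.trans (h ▸ closure_minimal (hcase.trans subset_closure) isClosed_closure)
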